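/- Let ψ : ℝ² → ℝ² be Lipschitz with constant L, let t ∈ ℝ with |t|L ≤ 1/2, and let x, y ∈ ℝ² with x ≠ y. Then |g((x-y) + t(ψ(x)-ψ(y))) - g(x-y) - t∇g(x-y)·(ψ(x)-ψ(y))| ≤ C t² L² for an absolute constant C independent of x, y and of |x-y|. -/
import Mathlib


open scoped RealInnerProductSpace NNReal

noncomputable section

/-- Pure real version of the Taylor estimate. -/
lemma aux_taylor (r a p nv t L : ℝ) (hr : 0 < r) (ha : r / 2 ≤ a)
    (hsq : a ^ 2 = r ^ 2 + 2 * t * p + t ^ 2 * nv ^ 2)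
    (hp : |p| ≤ r * nv) (hnv0 : 0 ≤ nv) (hnv : nv ≤ L * r) (hL : 0 ≤ L)
    (htL : |t| * L ≤ 1 / 2) :
    |(-Real.log a) - (-Real.log r) - t * (-(1 / r ^ 2) * p)| ≤
      13 * t ^ 2 * L ^ 2 := by
  have hr2 : (0:ℝ) < r ^ 2 := by positivity
  have ha0 : 0 < a := lt_of_lt_of_le (by linarith) ha
  obtain ⟨q, hq_def⟩ : ∃ q : ℝ, q = (2 * t * p + t ^ 2 * nv ^ 2) / r ^ 2 :=
    ⟨_, rfl⟩
  have hq1 : 1 + q = a ^ 2 / r ^ 2 := by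
    rw [hq_def]; field_simp; linarith [hsq]
  have hq4 : (1:ℝ) / 4 ≤ 1 + q := by
    rw [hq1, le_div_iff₀ hr2]
    have h1 := mul_self_le_mul_self (by linarith : (0:ℝ) ≤ r / 2) ha
    have h2 : (r / 2) * (r / 2) = r ^ 2 / 4 := by ring
    have h3 : a * a = a ^ 2 := by ring
    linarith
  have hqpos : (0:ℝ) < 1 + q := by linarith
  have hlog : Real.log (1 + q) = 2 * (Real.log a - Real.log r) := by
    rw [hq1, Real.log_div (by positivity) (by positivity)]
    rw [show a ^ 2 = a ^ (2:ℕ) from rfl, show r ^ 2 = r ^ (2:ℕ) from rfl,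
      Real.log_pow, Real.log_pow]
    push_cast; ring
  -- upper bound for log
  have hub : Real.log (1 + q) ≤ q := by
    have := Real.log_le_sub_one_of_pos hqpos; linarith
  -- lower bound for log
  have hlb : 1 - (1 + q)⁻¹ ≤ Real.log (1 + q) := by
    have h := Real.log_le_sub_one_of_pos (show (0:ℝ) < (1 + q)⁻¹ by positivity)
    rw [Real.log_inv] at h; linarith
  have hipos : (0:ℝ) < (1 + q)⁻¹ := by positivity
  have hi4 : (1 + q)⁻¹ ≤ 4 := by
    have h := inv_anti₀ (by norm_num : (0:ℝ) < 1 / 4) hq4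
    simpa using h
  have hkey : q - Real.log (1 + q) ≤ 4 * q ^ 2 := by
    have h1 : q - Real.log (1 + q) ≤ q - 1 + (1 + q)⁻¹ := by linarith
    have h2 : q - 1 + (1 + q)⁻¹ = q ^ 2 * (1 + q)⁻¹ := by
      field_simp
      ring
    have h3 : q ^ 2 * (1 + q)⁻¹ ≤ q ^ 2 * 4 :=
      mul_le_mul_of_nonneg_left hi4 (sq_nonneg q)
    linarith
  have hkey0 : 0 ≤ q - Real.log (1 + q) := by linarith
  -- bounds on q
  have hT0 : (0:ℝ) ≤ |t| := abs_nonneg t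
  have htp : t * p ≤ |t| * (r * nv) := by
    calc t * p ≤ |t * p| := le_abs_self _
    _ = |t| * |p| := abs_mul t p
    _ ≤ |t| * (r * nv) := mul_le_mul_of_nonneg_left hp hT0
  have htp' : -(|t| * (r * nv)) ≤ t * p := by
    have h : -(t * p) ≤ |t| * (r * nv) := by
      calc -(t * p) ≤ |t * p| := neg_le_abs _
      _ = |t| * |p| := abs_mul t p
      _ ≤ |t| * (r * nv) := mul_le_mul_of_nonneg_left hp hT0
    linarith
  have ht2 : t ^ 2 = |t| ^ 2 := (sq_abs t).symm
  have hTL0 : (0:ℝ) ≤ |t| * L := mul_nonneg hT0 hL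
  have hTL2 : (|t| * L) ^ 2 ≤ (1 / 2) * (|t| * L) := by
    calc (|t| * L) ^ 2 = (|t| * L) * (|t| * L) := by ring
    _ ≤ (|t| * L) * (1 / 2) := mul_le_mul_of_nonneg_left htL hTL0
    _ = (1 / 2) * (|t| * L) := by ring
  have hrnv : r * nv ≤ L * r ^ 2 := by
    calc r * nv ≤ r * (L * r) := mul_le_mul_of_nonneg_left hnv hr.le
    _ = L * r ^ 2 := by ring
  have h1 : t * p ≤ (|t| * L) * r ^ 2 := by
    refine htp.trans ?_
    calc |t| * (r * nv) ≤ |t| * (L * r ^ 2) := mul_le_mul_of_nonneg_left hrnv hT0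
    _ = (|t| * L) * r ^ 2 := by ring
  have h1' : -((|t| * L) * r ^ 2) ≤ t * p := by
    refine le_trans ?_ htp'
    have h : |t| * (r * nv) ≤ |t| * (L * r ^ 2) := mul_le_mul_of_nonneg_left hrnv hT0
    have h' : |t| * (L * r ^ 2) = (|t| * L) * r ^ 2 := by ring
    linarith
  have hnv2 : nv ^ 2 ≤ L ^ 2 * r ^ 2 := by
    have h := mul_self_le_mul_self hnv0 hnv
    calc nv ^ 2 = nv * nv := by ring
    _ ≤ (L * r) * (L * r) := h
    _ = L ^ 2 * r ^ 2 := by ring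
  have h2 : t ^ 2 * nv ^ 2 ≤ (|t| * L) ^ 2 * r ^ 2 := by
    rw [ht2]
    calc |t| ^ 2 * nv ^ 2 ≤ |t| ^ 2 * (L ^ 2 * r ^ 2) :=
      mul_le_mul_of_nonneg_left hnv2 (sq_nonneg _)
    _ = (|t| * L) ^ 2 * r ^ 2 := by ring
  have h2' : (|t| * L) ^ 2 * r ^ 2 ≤ (1 / 2) * (|t| * L) * r ^ 2 := by
    have := mul_le_mul_of_nonneg_right hTL2 hr2.le
    linarith
  have h20 : 0 ≤ t ^ 2 * nv ^ 2 := by positivity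
  have hqub : q ≤ (5 / 2) * (|t| * L) := by
    rw [hq_def, div_le_iff₀ hr2]
    have h : (5 / 2) * (|t| * L) * r ^ 2
        = 2 * ((|t| * L) * r ^ 2) + (1 / 2) * (|t| * L) * r ^ 2 := by ring
    linarith
  have hqlb : -((5 / 2) * (|t| * L)) ≤ q := by
    rw [hq_def, le_div_iff₀ hr2]
    have h : -((5 / 2) * (|t| * L)) * r ^ 2
        = -(2 * ((|t| * L) * r ^ 2)) - (1 / 2) * ((|t| * L) * r ^ 2) := by ring
    have h0 : 0 ≤ (1 / 2) * ((|t| * L) * r ^ 2) := by positivity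
    linarith
  have hq2 : q ^ 2 ≤ (25 / 4) * (t ^ 2 * L ^ 2) := by
    have h3 : q ^ 2 ≤ ((5 / 2) * (|t| * L)) ^ 2 := sq_le_sq' hqlb hqub
    calc q ^ 2 ≤ ((5 / 2) * (|t| * L)) ^ 2 := h3
    _ = (25 / 4) * (|t| ^ 2 * L ^ 2) := by ring
    _ = (25 / 4) * (t ^ 2 * L ^ 2) := by rw [← ht2]
  -- bound on the quadratic remainder term
  have hnvr : t ^ 2 * nv ^ 2 / (2 * r ^ 2) ≤ t ^ 2 * L ^ 2 / 2 := by
    rw [div_le_div_iff₀ (by positivity) (by norm_num : (0:ℝ) < 2)]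
    have h := mul_le_mul_of_nonneg_left hnv2 (sq_nonneg t)
    have h' : t ^ 2 * (L ^ 2 * r ^ 2) * 2 = t ^ 2 * L ^ 2 * (2 * r ^ 2) := by ring
    linarith
  have hnvr0 : 0 ≤ t ^ 2 * nv ^ 2 / (2 * r ^ 2) := by positivity
  have hE : (-Real.log a) - (-Real.log r) - t * (-(1 / r ^ 2) * p) =
      (1 / 2) * (q - Real.log (1 + q)) - t ^ 2 * nv ^ 2 / (2 * r ^ 2) := by
    rw [hlog, hq_def]
    field_simp
    ring
  rw [hE, abs_le]
  have htL2 : 0 ≤ t ^ 2 * L ^ 2 := by positivity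
  constructor <;> linarith [hkey, hkey0, hq2, hnvr, hnvr0, htL2]

/-- Careful Taylor expansion along a Lipschitz transport: for `ψ` Lipschitz with constant `L`,
`|t|L ≤ 1/2` and `x ≠ y`,
`|g((x-y)+t(ψ(x)-ψ(y))) - g(x-y) - t∇g(x-y)·(ψ(x)-ψ(y))| ≤ C t² L²`
with `C` an absolute constant independent of `x, y`. -/
theorem careful_taylor_expansion : ∃ C > (0:ℝ),
    ∀ (ψ : EuclideanSpace ℝ (Fin 2) → EuclideanSpace ℝ (Fin 2)) (L : ℝ≥0),
    LipschitzWith L ψ → ∀ t : ℝ, |t| * (L : ℝ) ≤ 1 / 2 →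
    ∀ x y : EuclideanSpace ℝ (Fin 2), x ≠ y →
    |(-Real.log ‖(x - y) + t • (ψ x - ψ y)‖) - (-Real.log ‖x - y‖)
        - t * ⟪(-(1 / ‖x - y‖ ^ 2)) • (x - y), ψ x - ψ y⟫| ≤
      C * t ^ 2 * (L : ℝ) ^ 2 := by
  refine ⟨13, by norm_num, ?_⟩
  intro ψ L hψ t htL x y hxy
  set u : EuclideanSpace ℝ (Fin 2) := x - y with hu
  set v : EuclideanSpace ℝ (Fin 2) := ψ x - ψ y with hv
  have hr : 0 < ‖u‖ := norm_pos_iff.mpr (sub_ne_zero.mpr hxy)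
  have hvle : ‖v‖ ≤ (L : ℝ) * ‖u‖ := by
    have h := hψ.dist_le_mul x y
    rwa [dist_eq_norm, dist_eq_norm] at h
  have hL0 : (0:ℝ) ≤ (L : ℝ) := L.coe_nonneg
  have hT0 : (0:ℝ) ≤ |t| := abs_nonneg t
  have htv : ‖t • v‖ ≤ ‖u‖ / 2 := by
    rw [norm_smul, Real.norm_eq_abs]
    calc |t| * ‖v‖ ≤ |t| * ((L : ℝ) * ‖u‖) := mul_le_mul_of_nonneg_left hvle hT0
    _ = (|t| * (L : ℝ)) * ‖u‖ := by ring
    _ ≤ (1 / 2) * ‖u‖ := mul_le_mul_of_nonneg_right htL (norm_nonneg u)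
    _ = ‖u‖ / 2 := by ring
  have ha : ‖u‖ / 2 ≤ ‖u + t • v‖ := by
    have h1 : ‖u‖ ≤ ‖u + t • v‖ + ‖t • v‖ := by
      calc ‖u‖ = ‖(u + t • v) - t • v‖ := by congr 1; abel
      _ ≤ ‖u + t • v‖ + ‖t • v‖ := norm_sub_le _ _
    linarith
  have hsq : ‖u + t • v‖ ^ 2 = ‖u‖ ^ 2 + 2 * t * ⟪u, v⟫ + t ^ 2 * ‖v‖ ^ 2 := by
    rw [@norm_add_sq_real, real_inner_smul_right, norm_smul, Real.norm_eq_abs,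
      mul_pow, sq_abs]
    ring
  have hp : |⟪u, v⟫| ≤ ‖u‖ * ‖v‖ := abs_real_inner_le_norm u v
  have hinner : ⟪(-(1 / ‖u‖ ^ 2)) • u, v⟫ = (-(1 / ‖u‖ ^ 2)) * ⟪u, v⟫ :=
    real_inner_smul_left u v _
  rw [hinner]
  exact aux_taylor ‖u‖ ‖u + t • v‖ ⟪u, v⟫ ‖v‖ t (L : ℝ) hr ha hsq hp
    (norm_nonneg v) hvle hL0 htL
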